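/- arXiv:2501.01572 — 2 statements merged into one kernel-verified Lean document; each statement's English description precedes it below -/
import Mathlib

section
/- Let x₁ < x₂ in (0,1) have Engel-type expansions x_i = Σ_{k=1}^∞ ∏_{m=1}^k 1/(2+a_1(x_i)+⋯+a_m(x_i)−m), and suppose p is the first index where the digit sequences differ, with a_p(x₂) < a_p(x₁). Then |?_{EM}(x₂) − ?_{EM}(x₁)| < 2^{1 − a_1 − a_2 − ⋯ − a_{p−1} − a_p(x₂)}, where a_1,…,a_{p−1} denote the common initial digits. -/
/-- The Engel-type sum `x = ∑ₖ ∏_{m=1}^k 1/(2+a₁+⋯+a_m−m)` of a positive-integer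
digit sequence `(a_k)` (0-indexed). -/
noncomputable def engelSum (a : ℕ → ℕ) : ℝ :=
  ∑' k : ℕ, ∏ m ∈ Finset.range (k + 1),
    1 / (2 + (∑ i ∈ Finset.range (m + 1), (a i : ℝ)) - (m + 1))

/-- `?_{EM}` as a function of the digit sequence:
`F(a) = ∑ₖ (−1)^{k+1} 2^{1−a₁−⋯−a_k}` (0-indexed). -/
noncomputable def engelMinkowski (a : ℕ → ℕ) : ℝ :=
  ∑' k : ℕ, (-1 : ℝ) ^ k * (2 : ℝ) ^ ((1 : ℤ) - ∑ i ∈ Finset.range (k + 1), (a i : ℤ))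

/-!
Since every digit is at least `1`, the magnitudes `t_k = 2^{1 - a_1 - ⋯ - a_k}` of the terms of
`?_{EM}` at least halve from one term to the next, so every tail `T_q = ∑_{k ≥ q} (-1)^{k-q} t_k` of
the alternating series lies in `[t_q / 2, t_q)`. The series of `a` and `b` share their first
`p - 1` terms, and `b_p < a_p` gives `t_p(a) ≤ t_p(b) / 2`. Hence
`T_p(a) < t_p(a) ≤ t_p(b) / 2 ≤ T_p(b) < t_p(b)`, and the two values differ by `± (T_p(b) - T_p(a))`,
a number in `(0, t_p(b))`.
-/

open Finset

theorem alternating_tsum_bounds {E : Type*} [Ring E] [LinearOrder E] [IsOrderedRing E]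
    [UniformSpace E] [IsUniformAddGroup E] [CompleteSpace E] [OrderClosedTopology E]
    {f : ℕ → E} (hfa : Antitone f) (hfs : Summable f) :
    f 0 - f 1 ≤ ∑' i, (-1) ^ i * f i ∧ ∑' i, (-1) ^ i * f i ≤ f 0 - f 1 + f 2 := by
  have h := hfs.tendsto_alternating_series_tsum
  constructor
  · simpa [sum_range_succ, sub_eq_add_neg] using hfa.alternating_series_le_tendsto h 1
  · simpa [sum_range_succ, sub_eq_add_neg] using hfa.tendsto_le_alternating_series h 1

theorem two_zpow_one_sub_le_half {m n : ℤ} (h : m < n) :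
    (2 : ℝ) ^ (1 - n) ≤ 2 ^ (1 - m) / 2 := by
  rw [div_eq_mul_inv, ← zpow_sub_one₀ two_ne_zero]
  exact zpow_le_zpow_right₀ one_le_two (by omega)

noncomputable def engelWeight (c : ℕ → ℕ) (k : ℕ) : ℝ :=
  (2 : ℝ) ^ ((1 : ℤ) - ∑ i ∈ range (k + 1), (c i : ℤ))

theorem engelMinkowski_eq_tsum (c : ℕ → ℕ) :
    engelMinkowski c = ∑' k, (-1) ^ k * engelWeight c k := rfl

theorem engelWeight_pos (c : ℕ → ℕ) (k : ℕ) : 0 < engelWeight c k :=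
  zpow_pos two_pos _

theorem engelWeight_congr {c d : ℕ → ℕ} {k : ℕ} (h : ∀ i ≤ k, c i = d i) :
    engelWeight c k = engelWeight d k := by
  unfold engelWeight
  rw [sum_congr rfl fun i hi => congrArg _ (h i (Nat.lt_succ_iff.1 (mem_range.1 hi)))]

theorem engelWeight_le_half_of_sum_lt {c d : ℕ → ℕ} {m n : ℕ}
    (h : ∑ i ∈ range (m + 1), (c i : ℤ) < ∑ i ∈ range (n + 1), (d i : ℤ)) :
    engelWeight d n ≤ engelWeight c m / 2 :=
  two_zpow_one_sub_le_half h

theorem engelWeight_succ_le_half {c : ℕ → ℕ} {n : ℕ} (hc : 1 ≤ c (n + 1)) :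
    engelWeight c (n + 1) ≤ engelWeight c n / 2 := by
  refine engelWeight_le_half_of_sum_lt ?_
  rw [sum_range_succ _ (n + 1)]
  omega

section PositiveDigits

variable {c : ℕ → ℕ}

theorem antitone_engelWeight (hc : ∀ k, 1 ≤ c k) : Antitone (engelWeight c) :=
  antitone_nat_of_succ_le fun n =>
    (engelWeight_succ_le_half (hc _)).trans (half_le_self (engelWeight_pos c n).le)

theorem summable_engelWeight (hc : ∀ k, 1 ≤ c k) : Summable (engelWeight c) := by
  refine summable_of_ratio_norm_eventually_le (r := 1 / 2) (by norm_num) ?_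
  refine Filter.Eventually.of_forall fun n => ?_
  rw [Real.norm_of_nonneg (engelWeight_pos c _).le, Real.norm_of_nonneg (engelWeight_pos c _).le]
  linarith [engelWeight_succ_le_half (c := c) (n := n) (hc _)]

noncomputable def engelTail (c : ℕ → ℕ) (q : ℕ) : ℝ :=
  ∑' k, (-1) ^ k * engelWeight c (k + q)

theorem engelMinkowski_eq_sum_add_engelTail (hc : ∀ k, 1 ≤ c k) (q : ℕ) :
    engelMinkowski c =
      ∑ k ∈ range q, (-1) ^ k * engelWeight c k + (-1) ^ q * engelTail c q := by
  rw [engelMinkowski_eq_tsum, ← (summable_engelWeight hc).alternating.sum_add_tsum_nat_add q,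
    engelTail, ← tsum_mul_left]
  congr 1
  exact tsum_congr fun k => by ring

theorem engelTail_mem_Ico (hc : ∀ k, 1 ≤ c k) (q : ℕ) :
    engelTail c q ∈ Set.Ico (engelWeight c q / 2) (engelWeight c q) := by
  have hanti : Antitone fun k => engelWeight c (k + q) :=
    fun _ _ h => antitone_engelWeight hc (by omega)
  obtain ⟨hlower, hupper⟩ :=
    alternating_tsum_bounds hanti ((summable_nat_add_iff q).2 (summable_engelWeight hc))
  have h₁ := engelWeight_succ_le_half (hc (q + 1))
  have h₂ := engelWeight_succ_le_half (hc (q + 1 + 1))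
  have hpos := engelWeight_pos c (q + 1)
  simp only [zero_add, add_comm 1 q, show 2 + q = q + 1 + 1 by ring] at hlower hupper
  constructor <;> unfold engelTail <;> linarith

end PositiveDigits

theorem engel_minkowski_difference_bound_general (a b : ℕ → ℕ)
    (ha : ∀ k, 1 ≤ a k) (hb : ∀ k, 1 ≤ b k) (p : ℕ) (hp : 1 ≤ p)
    (hagree : ∀ i, i < p - 1 → a i = b i) (hdiff : b (p - 1) < a (p - 1)) :
    |engelMinkowski b - engelMinkowski a| <
      (2 : ℝ) ^ ((1 : ℤ) - ∑ i ∈ Finset.range p, (b i : ℤ)) := by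
  obtain ⟨q, rfl⟩ : ∃ q, p = q + 1 := ⟨p - 1, by omega⟩
  rw [Nat.add_sub_cancel] at hagree hdiff
  have hprefix : ∑ i ∈ range q, (a i : ℤ) = ∑ i ∈ range q, (b i : ℤ) :=
    sum_congr rfl fun i hi => by rw [hagree i (mem_range.1 hi)]
  have hhead : ∑ k ∈ range q, (-1) ^ k * engelWeight a k =
      ∑ k ∈ range q, (-1) ^ k * engelWeight b k :=
    sum_congr rfl fun k hk => by
      rw [engelWeight_congr fun i hi => hagree i (lt_of_le_of_lt hi (mem_range.1 hk))]
  have hweight : engelWeight a q ≤ engelWeight b q / 2 :=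
    engelWeight_le_half_of_sum_lt (by rw [sum_range_succ, sum_range_succ, hprefix]; omega)
  obtain ⟨hTa_lower, hTa_upper⟩ := engelTail_mem_Ico ha q
  obtain ⟨hTb_lower, hTb_upper⟩ := engelTail_mem_Ico hb q
  have hpos := engelWeight_pos a q
  change _ < engelWeight b q
  rw [engelMinkowski_eq_sum_add_engelTail hb q, engelMinkowski_eq_sum_add_engelTail ha q, hhead,
    add_sub_add_left_eq_sub, ← mul_sub, abs_mul, abs_pow, abs_neg, abs_one, one_pow, one_mul,
    abs_of_pos (by linarith)]
  linarith

/-- If `x₁ < x₂` have Engel-type digit sequences `a`, `b` first differing at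
position `p` with `b_p < a_p`, then
`|?_{EM}(x₂) − ?_{EM}(x₁)| < 2^{1 − a₁ − ⋯ − a_{p−1} − a_p(x₂)}`. -/
theorem engel_minkowski_difference_bound (a b : ℕ → ℕ)
    (ha : ∀ k, 1 ≤ a k) (hb : ∀ k, 1 ≤ b k) (p : ℕ) (hp : 1 ≤ p)
    (hagree : ∀ i, i < p - 1 → a i = b i) (hdiff : b (p - 1) < a (p - 1))
    (hlt : engelSum a < engelSum b) :
    |engelMinkowski b - engelMinkowski a| <
      (2 : ℝ) ^ ((1 : ℤ) - ∑ i ∈ Finset.range p, (b i : ℤ)) :=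
  engel_minkowski_difference_bound_general a b ha hb p hp hagree hdiff
end

section
/- The function ?_{EM} is continuous on the set of points x ∈ (0,1) possessing an infinite Engel-type expansion x = Σ_{k=1}^∞ ∏_{m=1}^k 1/(2+a_1+⋯+a_m−m): if x_n → x with the first p(n) digits of x_n agreeing with those of x and p(n) → ∞, then ?_{EM}(x_n) → ?_{EM}(x). -/
/-
If the first `N` digits of two sequences agree, the first `N` terms of the alternating series
defining `?_{EM}` agree, and since every digit is at least `1` the `k`-th term has modulus at
most `2⁻ᵏ`. Hence the two values differ by at most twice a geometric tail, `4 · 2⁻ᴺ`, which tends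
to `0` as `N = p(n) → ∞`.
-/

open Filter Finset

noncomputable def engelMinkowskiTerm (a : ℕ → ℕ) (k : ℕ) : ℝ :=
  (-1 : ℝ) ^ k * (2 : ℝ) ^ ((1 : ℤ) - ∑ i ∈ range (k + 1), (a i : ℤ))

lemma engelMinkowski_eq_tsum_s12 (a : ℕ → ℕ) :
    engelMinkowski a = ∑' k, engelMinkowskiTerm a k :=
  rfl

lemma norm_engelMinkowskiTerm_le {a : ℕ → ℕ} (ha : ∀ k, 1 ≤ a k) (k : ℕ) :
    ‖engelMinkowskiTerm a k‖ ≤ (1 / 2 : ℝ) ^ k := by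
  have hsum : (k + 1 : ℤ) ≤ ∑ i ∈ range (k + 1), (a i : ℤ) := by
    simpa using sum_le_sum fun i (_ : i ∈ range (k + 1)) =>
      (by exact_mod_cast ha i : (1 : ℤ) ≤ a i)
  calc ‖engelMinkowskiTerm a k‖
      = (2 : ℝ) ^ ((1 : ℤ) - ∑ i ∈ range (k + 1), (a i : ℤ)) := by
        rw [engelMinkowskiTerm, norm_mul, norm_pow, norm_neg, norm_one, one_pow, one_mul,
          Real.norm_of_nonneg (zpow_nonneg zero_le_two _)]
    _ ≤ (2 : ℝ) ^ (-(k : ℤ)) := zpow_le_zpow_right₀ one_le_two (by omega)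
    _ = (1 / 2 : ℝ) ^ k := by rw [zpow_neg, zpow_natCast, one_div, inv_pow]

lemma summable_engelMinkowskiTerm {a : ℕ → ℕ} (ha : ∀ k, 1 ≤ a k) :
    Summable (engelMinkowskiTerm a) :=
  .of_norm_bounded summable_geometric_two (norm_engelMinkowskiTerm_le ha)

lemma norm_tsum_engelMinkowskiTerm_add_le {a : ℕ → ℕ} (ha : ∀ k, 1 ≤ a k) (N : ℕ) :
    ‖∑' k, engelMinkowskiTerm a (k + N)‖ ≤ (1 / 2 : ℝ) ^ N * 2 := by
  refine tsum_of_norm_bounded (f := fun k => engelMinkowskiTerm a (k + N))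
    (hasSum_geometric_two.mul_left ((1 / 2 : ℝ) ^ N)) fun k => ?_
  rw [← pow_add, add_comm N]
  exact norm_engelMinkowskiTerm_le ha (k + N)

lemma engelMinkowskiTerm_congr {a b : ℕ → ℕ} {k : ℕ} (h : ∀ i ≤ k, a i = b i) :
    engelMinkowskiTerm a k = engelMinkowskiTerm b k := by
  unfold engelMinkowskiTerm
  congr 3
  exact sum_congr rfl fun i hi => by rw [h i (Nat.lt_succ_iff.mp (mem_range.mp hi))]

lemma norm_engelMinkowski_sub_le_of_eqOn {a b : ℕ → ℕ} (ha : ∀ k, 1 ≤ a k)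
    (hb : ∀ k, 1 ≤ b k) {N : ℕ} (hab : ∀ i < N, a i = b i) :
    ‖engelMinkowski a - engelMinkowski b‖ ≤ 4 * (1 / 2 : ℝ) ^ N := by
  have hhead : ∑ k ∈ range N, engelMinkowskiTerm a k = ∑ k ∈ range N, engelMinkowskiTerm b k :=
    sum_congr rfl fun k hk =>
      engelMinkowskiTerm_congr fun i hi => hab i (lt_of_le_of_lt hi (mem_range.mp hk))
  rw [engelMinkowski_eq_tsum_s12, engelMinkowski_eq_tsum_s12,
    ← (summable_engelMinkowskiTerm ha).sum_add_tsum_nat_add N,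
    ← (summable_engelMinkowskiTerm hb).sum_add_tsum_nat_add N, hhead, add_sub_add_left_eq_sub]
  calc _ ≤ ‖∑' k, engelMinkowskiTerm a (k + N)‖ + ‖∑' k, engelMinkowskiTerm b (k + N)‖ :=
        norm_sub_le _ _
    _ ≤ (1 / 2 : ℝ) ^ N * 2 + (1 / 2 : ℝ) ^ N * 2 :=
        add_le_add (norm_tsum_engelMinkowskiTerm_add_le ha N)
          (norm_tsum_engelMinkowskiTerm_add_le hb N)
    _ = 4 * (1 / 2 : ℝ) ^ N := by ring

theorem engel_minkowski_continuous_general (A : ℕ → ℕ) (hA : ∀ k, 1 ≤ A k)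
    (a : ℕ → ℕ → ℕ) (ha : ∀ n k, 1 ≤ a n k) (p : ℕ → ℕ)
    (hagree : ∀ n i, i < p n → a n i = A i)
    (hp : Filter.Tendsto p Filter.atTop Filter.atTop) :
    Filter.Tendsto (fun n => engelMinkowski (a n)) Filter.atTop
      (nhds (engelMinkowski A)) := by
  have hbound : Tendsto (fun N : ℕ => 4 * (1 / 2 : ℝ) ^ N) atTop (nhds 0) := by
    simpa using (tendsto_pow_atTop_nhds_zero_of_lt_one (by norm_num : (0 : ℝ) ≤ 1 / 2)
      (by norm_num)).const_mul 4
  rw [← tendsto_sub_nhds_zero_iff]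
  exact squeeze_zero_norm (fun n => norm_engelMinkowski_sub_le_of_eqOn (ha n) hA (hagree n))
    (hbound.comp hp)

/-- Continuity of `?_{EM}` along digit-wise convergence: if `xₙ → x`, the first
`p(n)` digits of `xₙ` agree with those of `x`, and `p(n) → ∞`, then
`?_{EM}(xₙ) → ?_{EM}(x)`. -/
theorem engel_minkowski_continuous (A : ℕ → ℕ) (hA : ∀ k, 1 ≤ A k)
    (a : ℕ → ℕ → ℕ) (ha : ∀ n k, 1 ≤ a n k) (p : ℕ → ℕ)
    (hagree : ∀ n i, i < p n → a n i = A i)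
    (hp : Filter.Tendsto p Filter.atTop Filter.atTop)
    (hx : Filter.Tendsto (fun n => engelSum (a n)) Filter.atTop (nhds (engelSum A))) :
    Filter.Tendsto (fun n => engelMinkowski (a n)) Filter.atTop
      (nhds (engelMinkowski A)) :=
  engel_minkowski_continuous_general A hA a ha p hagree hp
end
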